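/- For every mechanism J on tie-free profiles that is ordinal and truthful, there exists a mechanism J' on tie-free profiles that is ordinal, neutral, anonymous and truthful and satisfies ratio_U(J') ≥ ratio_U(J). -/

import Mathlib

open Finset

/-- A normalized preference function: maps into `[0,1]` and attains both `0` and `1`. -/
def IsPref {m : ℕ} (u : Fin m → ℝ) : Prop :=
  (∀ j, 0 ≤ u j ∧ u j ≤ 1) ∧ (∃ j, u j = 0) ∧ (∃ j, u j = 1)

/-- A tie-free normalized preference function. -/
def IsPrefU {m : ℕ} (u : Fin m → ℝ) : Prop :=
  IsPref u ∧ Function.Injective u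

/-- A profile of normalized preference functions. -/
def IsProfile {n m : ℕ} (u : Fin n → Fin m → ℝ) : Prop :=
  ∀ i, IsPref (u i)

/-- A tie-free profile. -/
def IsProfileU {n m : ℕ} (u : Fin n → Fin m → ℝ) : Prop :=
  ∀ i, IsPrefU (u i)

/-- `p` is a probability distribution over the `m` candidates. -/
def IsDist {m : ℕ} (p : Fin m → ℝ) : Prop :=
  (∀ j, 0 ≤ p j) ∧ ∑ j, p j = 1

/-- Social welfare of candidate `j` under profile `u`. -/
def Wel {n m : ℕ} (j : Fin m) (u : Fin n → Fin m → ℝ) : ℝ :=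
  ∑ i, u i j

/-- Range voting: the candidate of maximal social welfare, ties broken
toward the smaller index. -/
noncomputable def RV {n m : ℕ} (hm : 0 < m) (u : Fin n → Fin m → ℝ) : Fin m :=
  (Finset.univ.filter fun j => ∀ j', Wel j' u ≤ Wel j u).min' (by
    obtain ⟨j, -, hj⟩ := Finset.exists_max_image (Finset.univ : Finset (Fin m))
      (fun j => Wel j u) ⟨⟨0, hm⟩, Finset.mem_univ _⟩
    exact ⟨j, Finset.mem_filter.2 ⟨Finset.mem_univ _, fun j' => hj j' (Finset.mem_univ _)⟩⟩)

/-- Expected social welfare of a randomized mechanism `J` (given as the map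
sending a profile to the probability of each candidate winning). -/
noncomputable def expWel {n m : ℕ} (J : (Fin n → Fin m → ℝ) → Fin m → ℝ)
    (u : Fin n → Fin m → ℝ) : ℝ :=
  ∑ j, J u j * Wel j u

/-- Rank of candidate `j` in preference `v`, ties broken in favor of the
smaller candidate index (the most preferred candidate has rank 1). -/
noncomputable def rnk {m : ℕ} (v : Fin m → ℝ) (j : Fin m) : ℕ :=
  (Finset.univ.filter fun j' => v j < v j' ∨ (v j' = v j ∧ j' ≤ j)).card

/-- The mechanism `J^{1,q}`: pick a voter uniformly at random, then a winner
uniformly at random among that voter's `q` most preferred candidates. -/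
noncomputable def Jone (q : ℕ) {n m : ℕ} (u : Fin n → Fin m → ℝ) : Fin m → ℝ :=
  fun j => (∑ i : Fin n, if rnk (u i) j ≤ q then ((q : ℝ))⁻¹ else 0) / (n : ℝ)

/-- `⌊m^{1/3}⌋`. -/
noncomputable def mroot3 (m : ℕ) : ℕ := ⌊(m : ℝ) ^ ((1 : ℝ)/3)⌋₊

/-- The mechanism `J*`, running `J^{1,1}` and `J^{1,⌊m^{1/3}⌋}` each with
probability `1/2`. -/
noncomputable def Jstar {n m : ℕ} (u : Fin n → Fin m → ℝ) : Fin m → ℝ :=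
  fun j => (Jone 1 u j + Jone (mroot3 m) u j) / 2

/-- Voter with preference `v` prefers `j₀` to `j₁` (ties toward the smaller
candidate index). -/
def Prefers {m : ℕ} (v : Fin m → ℝ) (j₀ j₁ : Fin m) : Prop :=
  v j₁ < v j₀ ∨ (v j₀ = v j₁ ∧ j₀ < j₁)

noncomputable instance {m : ℕ} (v : Fin m → ℝ) (j₀ j₁ : Fin m) :
    Decidable (Prefers v j₀ j₁) := by unfold Prefers; infer_instance

/-- The mechanism `J^{2,q}`: pick two distinct candidates uniformly at random,
let each voter vote for the one it prefers; if one of the two gets at least `q`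
votes it wins, otherwise the winner is one of the two by a fair coin. -/
noncomputable def Jtwo (q : ℕ) {n m : ℕ} (u : Fin n → Fin m → ℝ) : Fin m → ℝ :=
  fun j =>
    (∑ j₀ : Fin m, ∑ j₁ : Fin m,
      if j₀ = j₁ then 0
      else
        if q ≤ (Finset.univ.filter fun i => Prefers (u i) j₀ j₁).card then
          (if j = j₀ then (1 : ℝ) else 0)
        else if q ≤ n - (Finset.univ.filter fun i => Prefers (u i) j₀ j₁).card then
          (if j = j₁ then (1 : ℝ) else 0)
        else ((if j = j₀ then (1 : ℝ)/2 else 0) + (if j = j₁ then (1 : ℝ)/2 else 0)))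
      / ((m * (m - 1) : ℕ) : ℝ)

/-- `J` assigns a probability distribution to every tie-free profile. -/
def MechU {n m : ℕ} (J : (Fin n → Fin m → ℝ) → Fin m → ℝ) : Prop :=
  ∀ u, IsProfileU u → IsDist (J u)

/-- Truthfulness (on tie-free profiles). -/
def Truthful {n m : ℕ} (J : (Fin n → Fin m → ℝ) → Fin m → ℝ) : Prop :=
  ∀ u, IsProfileU u → ∀ (i : Fin n) (v : Fin m → ℝ), IsPrefU v →
    ∑ j, J (Function.update u i v) j * u i j ≤ ∑ j, J u j * u i j

/-- Ordinality (on tie-free profiles). -/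
def OrdinalMech {n m : ℕ} (J : (Fin n → Fin m → ℝ) → Fin m → ℝ) : Prop :=
  ∀ u u' : Fin n → Fin m → ℝ, IsProfileU u → IsProfileU u' →
    (∀ i (j j' : Fin m), u i j < u i j' ↔ u' i j < u' i j') → J u = J u'

/-- Unilateral mechanism (on tie-free profiles): depends only on one voter. -/
def Unilateral {n m : ℕ} (J : (Fin n → Fin m → ℝ) → Fin m → ℝ) : Prop :=
  ∃ i : Fin n, ∀ u u' : Fin n → Fin m → ℝ, IsProfileU u → IsProfileU u' →
    u i = u' i → J u = J u'

/-- Duple mechanism (on tie-free profiles): supported on two fixed candidates. -/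
def Duple {n m : ℕ} (J : (Fin n → Fin m → ℝ) → Fin m → ℝ) : Prop :=
  ∃ j₀ j₁ : Fin m, j₀ ≠ j₁ ∧ ∀ u, IsProfileU u → ∀ j, j ≠ j₀ → j ≠ j₁ → J u j = 0

/-- Neutral mechanism (on tie-free profiles). -/
def Neutral {n m : ℕ} (J : (Fin n → Fin m → ℝ) → Fin m → ℝ) : Prop :=
  ∀ τ : Equiv.Perm (Fin m), ∀ u : Fin n → Fin m → ℝ, IsProfileU u →
    ∀ j, J (fun i => u i ∘ τ) j = J u (τ j)

/-- Anonymous mechanism (on tie-free profiles). -/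
def AnonymousMech {n m : ℕ} (J : (Fin n → Fin m → ℝ) → Fin m → ℝ) : Prop :=
  ∀ σ : Equiv.Perm (Fin n), ∀ u : Fin n → Fin m → ℝ, IsProfileU u →
    J (fun i => u (σ i)) = J u

/-- `ratio_U(J)`: infimum of the welfare ratio over tie-free profiles. -/
noncomputable def ratioU {n m : ℕ} (hm : 0 < m)
    (J : (Fin n → Fin m → ℝ) → Fin m → ℝ) : ℝ :=
  sInf {r | ∃ u, IsProfileU u ∧ r = expWel J u / Wel (RV hm u) u}

/-- `R_k`: tie-free normalized preferences taking values in `{0,1/k,…,1}`. -/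
def Rk {m : ℕ} (k : ℕ) (u : Fin m → ℝ) : Prop :=
  IsPrefU u ∧ ∀ j, ∃ t : ℕ, t ≤ k ∧ u j = (t : ℝ) / k

/-- `a(u)`: the number of `t ∈ {0,…,k-1}` such that exactly one of `t/k` and
`(t+1)/k` lies in the image of `u`. -/
noncomputable def aOf {m : ℕ} (k : ℕ) (u : Fin m → ℝ) : ℕ :=
  ((Finset.range k).filter fun t : ℕ =>
    ((∃ j : Fin m, u j = (t : ℝ) / k) ∧ ¬ (∃ j : Fin m, u j = ((t : ℝ) + 1) / k)) ∨
    ((∃ j : Fin m, u j = ((t : ℝ) + 1) / k) ∧ ¬ (∃ j : Fin m, u j = (t : ℝ) / k))).card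

/-- `C_k = {u ∈ R_k : a(u) = 2}`. -/
def Ck {m : ℕ} (k : ℕ) (u : Fin m → ℝ) : Prop :=
  Rk k u ∧ aOf k u = 2

/-- `count(u)`: the number of candidates with `u`-value above `1/2`. -/
noncomputable def countOf {m : ℕ} (u : Fin m → ℝ) : ℕ :=
  (Finset.univ.filter fun j => (1 : ℝ)/2 < u j).card

/-- `rank(u,j) = #{j' : u(j') ≥ u(j)}`. -/
noncomputable def rankOf {m : ℕ} (u : Fin m → ℝ) (j : Fin m) : ℕ :=
  (Finset.univ.filter fun j' => u j ≤ u j').card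

/-- `D_k = D_k^{(a)} ∪ D_k^{(b)} ∪ D_k^{(c)}` (`⟨0,hm⟩` is the first candidate). -/
def Dk {m : ℕ} (hm : 0 < m) (k : ℕ) (u : Fin m → ℝ) : Prop :=
  Ck k u ∧
    ((countOf u ≤ 2 ∧ (1 : ℝ)/2 < u ⟨0, hm⟩) ∨
     (countOf u = 1 ∧ mroot3 m < rankOf u ⟨0, hm⟩) ∨
     (countOf u = mroot3 m + 1 ∧ rankOf u ⟨0, hm⟩ = mroot3 m + 1))

/-- `g(u) = E[Wel(J*(u),u)] / Wel(1,u)` where `1` is the first candidate. -/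
noncomputable def gfun {n m : ℕ} (hm : 0 < m) (u : Fin n → Fin m → ℝ) : ℝ :=
  expWel Jstar u / Wel ⟨0, hm⟩ u

/-- The minimum (as an infimum) of `f` over profiles all of whose preference
functions satisfy `P`. -/
noncomputable def minOver {n m : ℕ} (P : (Fin m → ℝ) → Prop)
    (f : (Fin n → Fin m → ℝ) → ℝ) : ℝ :=
  sInf {r | ∃ u : Fin n → Fin m → ℝ, (∀ i, P (u i)) ∧ r = f u}

/-! The symmetrized mechanism runs `J` on the profile relabelled by a uniformly random pair
(permutation of the voters, permutation of the candidates) and translates the winner back.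
Relabelling preserves ordinality, truthfulness and the optimal welfare, so every property of `J`
survives the averaging, the average is invariant under relabelling (neutral and anonymous), and
its welfare ratio on each profile is an average of ratios of `J`, hence at least `ratio_U(J)`. -/

abbrev PermPair (n m : ℕ) := Equiv.Perm (Fin n) × Equiv.Perm (Fin m)

section Symmetrize

variable {n m : ℕ}

def permProfile (g : PermPair n m) (u : Fin n → Fin m → ℝ) : Fin n → Fin m → ℝ :=
  fun i => u (g.1 i) ∘ g.2

noncomputable def symmetrize (J : (Fin n → Fin m → ℝ) → Fin m → ℝ) :
    (Fin n → Fin m → ℝ) → Fin m → ℝ :=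
  fun u j => (∑ g : PermPair n m, J (permProfile g u) (g.2⁻¹ j)) / Fintype.card (PermPair n m)

lemma IsPrefU.comp_perm {v : Fin m → ℝ} (h : IsPrefU v) (τ : Equiv.Perm (Fin m)) :
    IsPrefU (v ∘ τ) := by
  obtain ⟨⟨hbound, ⟨j₀, h₀⟩, ⟨j₁, h₁⟩⟩, hinj⟩ := h
  exact ⟨⟨fun j => hbound (τ j), ⟨τ⁻¹ j₀, by simp [h₀]⟩, ⟨τ⁻¹ j₁, by simp [h₁]⟩⟩,
    hinj.comp τ.injective⟩

lemma IsProfileU.permProfile {u : Fin n → Fin m → ℝ} (hu : IsProfileU u) (g : PermPair n m) :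
    IsProfileU (permProfile g u) :=
  fun i => (hu (g.1 i)).comp_perm g.2

lemma permProfile_permProfile (g h : PermPair n m) (u : Fin n → Fin m → ℝ) :
    permProfile g (permProfile h u) = permProfile (h * g) u :=
  rfl

lemma permProfile_update (g : PermPair n m) (u : Fin n → Fin m → ℝ) (i : Fin n)
    (v : Fin m → ℝ) :
    permProfile g (Function.update u i v) =
      Function.update (permProfile g u) (g.1⁻¹ i) (v ∘ g.2) := by
  funext i'
  rcases eq_or_ne i' (g.1⁻¹ i) with rfl | hi'
  · simp [permProfile]
  · have : g.1 i' ≠ i := fun hc => hi' (by simp [← hc])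
    rw [Function.update_of_ne hi']
    simp [permProfile, Function.update_of_ne this]

lemma Wel_permProfile (g : PermPair n m) (u : Fin n → Fin m → ℝ) (j : Fin m) :
    Wel j (permProfile g u) = Wel (g.2 j) u :=
  Equiv.sum_comp g.1 (fun i => u i (g.2 j))

lemma Wel_le_Wel_RV (hm : 0 < m) (u : Fin n → Fin m → ℝ) (j : Fin m) :
    Wel j u ≤ Wel (RV hm u) u :=
  (Finset.mem_filter.mp
    (Finset.min'_mem (Finset.univ.filter fun j => ∀ j', Wel j' u ≤ Wel j u) _)).2 j

lemma Wel_RV_permProfile (hm : 0 < m) (g : PermPair n m) (u : Fin n → Fin m → ℝ) :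
    Wel (RV hm (permProfile g u)) (permProfile g u) = Wel (RV hm u) u := by
  apply le_antisymm
  · rw [Wel_permProfile]
    exact Wel_le_Wel_RV hm u _
  · simpa [Wel_permProfile] using Wel_le_Wel_RV hm (permProfile g u) (g.2⁻¹ (RV hm u))

lemma sum_symmetrize_mul (J : (Fin n → Fin m → ℝ) → Fin m → ℝ) (u : Fin n → Fin m → ℝ)
    (w : Fin m → ℝ) :
    ∑ j, symmetrize J u j * w j =
      (∑ g : PermPair n m, ∑ j, J (permProfile g u) j * w (g.2 j)) /
        Fintype.card (PermPair n m) := by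
  simp only [symmetrize, div_mul_eq_mul_div, Finset.sum_mul, ← Finset.sum_div]
  rw [Finset.sum_comm]
  congr 1
  refine Finset.sum_congr rfl fun g _ => ?_
  simpa using (Equiv.sum_comp g.2 fun j => J (permProfile g u) (g.2⁻¹ j) * w j).symm

lemma symmetrize_permProfile (J : (Fin n → Fin m → ℝ) → Fin m → ℝ) (h : PermPair n m)
    (u : Fin n → Fin m → ℝ) (j : Fin m) :
    symmetrize J (permProfile h u) j = symmetrize J u (h.2 j) := by
  simp only [symmetrize, permProfile_permProfile]
  congr 1
  have hinv (g : PermPair n m) : (h * g).2⁻¹ (h.2 j) = g.2⁻¹ j := by simp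
  simp_rw [← hinv]
  exact Equiv.sum_comp (Equiv.mulLeft h) fun g => J (permProfile g u) (g.2⁻¹ (h.2 j))

lemma neutral_symmetrize (J : (Fin n → Fin m → ℝ) → Fin m → ℝ) : Neutral (symmetrize J) :=
  fun τ u _ j => symmetrize_permProfile J (1, τ) u j

lemma anonymousMech_symmetrize (J : (Fin n → Fin m → ℝ) → Fin m → ℝ) :
    AnonymousMech (symmetrize J) :=
  fun σ u _ => funext fun j => symmetrize_permProfile J (σ, 1) u j

variable {J : (Fin n → Fin m → ℝ) → Fin m → ℝ}

lemma MechU.symmetrize (hJ : MechU J) : MechU (symmetrize J) := by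
  intro u hu
  refine ⟨fun j => div_nonneg (Finset.sum_nonneg fun g _ => (hJ _ (hu.permProfile g)).1 _)
    (Nat.cast_nonneg _), ?_⟩
  have hcard : (0 : ℝ) < Fintype.card (PermPair n m) := by exact_mod_cast Fintype.card_pos
  simpa [(hJ _ (hu.permProfile _)).2, hcard.ne'] using sum_symmetrize_mul J u 1

lemma OrdinalMech.symmetrize (hJ : OrdinalMech J) : OrdinalMech (symmetrize J) := by
  intro u u' hu hu' hord
  funext j
  simp only [_root_.symmetrize]
  congr 1
  refine Finset.sum_congr rfl fun g _ => ?_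
  rw [hJ _ _ (hu.permProfile g) (hu'.permProfile g) fun i j j' => hord (g.1 i) (g.2 j) (g.2 j')]

lemma Truthful.symmetrize (hJ : Truthful J) : Truthful (symmetrize J) := by
  intro u hu i v hv
  rw [sum_symmetrize_mul, sum_symmetrize_mul]
  refine div_le_div_of_nonneg_right (Finset.sum_le_sum fun g _ => ?_) (Nat.cast_nonneg _)
  have hvoter : u i ∘ g.2 = permProfile g u (g.1⁻¹ i) := by simp [permProfile]
  simpa only [permProfile_update, ← hvoter, Function.comp_apply] using
    hJ (permProfile g u) (hu.permProfile g) (g.1⁻¹ i) (v ∘ g.2) (hv.comp_perm g.2)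

lemma expWel_symmetrize (u : Fin n → Fin m → ℝ) :
    expWel (symmetrize J) u =
      (∑ g : PermPair n m, expWel J (permProfile g u)) / Fintype.card (PermPair n m) := by
  simp only [expWel, sum_symmetrize_mul, Wel_permProfile]

lemma ratioU_le (hm : 0 < m) (hJ : MechU J) {u : Fin n → Fin m → ℝ} (hu : IsProfileU u) :
    ratioU hm J ≤ expWel J u / Wel (RV hm u) u := by
  refine csInf_le ⟨0, ?_⟩ ⟨u, hu, rfl⟩
  rintro _ ⟨u', hu', rfl⟩
  have hWel (j : Fin m) : 0 ≤ Wel j u' := Finset.sum_nonneg fun i _ => ((hu' i).1.1 j).1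
  exact div_nonneg (Finset.sum_nonneg fun j _ => mul_nonneg ((hJ u' hu').1 j) (hWel j)) (hWel _)

lemma exists_isPrefU (hm : 2 ≤ m) : ∃ v : Fin m → ℝ, IsPrefU v := by
  have hm₁ : (0 : ℝ) < m - 1 := by
    have : (2 : ℝ) ≤ m := by exact_mod_cast hm
    linarith
  refine ⟨fun j => (j : ℝ) / (m - 1), ⟨fun j => ⟨by positivity, ?_⟩, ⟨⟨0, by omega⟩, by simp⟩,
    ⟨⟨m - 1, by omega⟩, ?_⟩⟩, fun a b hab => ?_⟩
  · rw [div_le_one hm₁, le_sub_iff_add_le]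
    exact_mod_cast j.isLt
  · simp [Nat.cast_sub (by omega : 1 ≤ m), hm₁.ne']
  · exact Fin.ext (by exact_mod_cast (div_left_inj' hm₁.ne').mp hab)

lemma ratioU_le_ratioU_symmetrize (hm : 2 ≤ m) (hJ : MechU J) :
    ratioU (zero_lt_two.trans_le hm) J ≤ ratioU (zero_lt_two.trans_le hm) (symmetrize J) := by
  obtain ⟨v, hv⟩ := exists_isPrefU hm
  refine le_csInf ⟨_, fun _ => v, fun _ => hv, rfl⟩ ?_
  rintro _ ⟨u, hu, rfl⟩
  have hcard : (0 : ℝ) < Fintype.card (PermPair n m) := by exact_mod_cast Fintype.card_pos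
  rw [expWel_symmetrize, div_right_comm, Finset.sum_div, le_div_iff₀ hcard, mul_comm,
    ← nsmul_eq_mul, ← Finset.card_univ]
  refine Finset.card_nsmul_le_sum _ _ _ fun g _ => ?_
  simpa only [Wel_RV_permProfile] using ratioU_le (zero_lt_two.trans_le hm) hJ (hu.permProfile g)

end Symmetrize

/-- for every ordinal truthful mechanism `J` on tie-free profiles
there is an ordinal, neutral, anonymous and truthful mechanism `J'` on
tie-free profiles with `ratio_U(J') ≥ ratio_U(J)`. -/
theorem stmt6 (n m : ℕ) (hm : 2 ≤ m)
    (J : (Fin n → Fin m → ℝ) → Fin m → ℝ)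
    (hJ : MechU J) (hOrd : OrdinalMech J) (hT : Truthful J) :
    ∃ J' : (Fin n → Fin m → ℝ) → Fin m → ℝ,
      MechU J' ∧ OrdinalMech J' ∧ Neutral J' ∧ AnonymousMech J' ∧ Truthful J' ∧
      ratioU (show 0 < m by omega) J ≤ ratioU (show 0 < m by omega) J' :=
  ⟨symmetrize J, hJ.symmetrize, hOrd.symmetrize, neutral_symmetrize J,
    anonymousMech_symmetrize J, hT.symmetrize, ratioU_le_ratioU_symmetrize hm hJ⟩
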